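/- arXiv:2407.19469 — 2 statements merged into one kernel-verified Lean document; each statement's English description precedes it below -/
import Mathlib

section
/- Let D be a finite set, x ∈ D, and A : Set(D) → ℝ. Grouping the sum over all permutations by the predecessor set: (1/|D|!) · Σ_{π ∈ Perm(D)} [A(P_π(x) ∪ {x}) − A(P_π(x))] = Σ_{S ⊆ D\{x}} [|S|! · (|D| − |S| − 1)! / |D|!] · [A(S ∪ {x}) − A(S)]. -/
open Finset

/-- The set of elements strictly preceding `x` in the permutation `σ`. -/
def preds {n : ℕ} (σ : Equiv.Perm (Fin n)) (x : Fin n) : Finset (Fin n) :=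
  Finset.univ.filter fun y => σ y < σ x

section Fiber

variable {n : ℕ} (x : Fin n) (S : Finset (Fin n))

def glueFun (hkn : S.card < n)
    (p : {a // a ∈ S} ≃ {b : Fin n // (b : ℕ) < S.card})
    (q : {a : Fin n // a ∉ S ∧ a ≠ x} ≃ {b : Fin n // S.card < (b : ℕ)}) (y : Fin n) :
    Fin n :=
  if h : y ∈ S then (p ⟨y, h⟩).1
    else if h2 : y = x then ⟨S.card, hkn⟩ else (q ⟨y, h, h2⟩).1

def glueInv (hkn : S.card < n)
    (p : {a // a ∈ S} ≃ {b : Fin n // (b : ℕ) < S.card})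
    (q : {a : Fin n // a ∉ S ∧ a ≠ x} ≃ {b : Fin n // S.card < (b : ℕ)}) (b : Fin n) :
    Fin n :=
  if h : (b : ℕ) < S.card then (p.symm ⟨b, h⟩).1
    else if h2 : S.card < (b : ℕ) then (q.symm ⟨b, h2⟩).1 else x

variable {hkn : S.card < n}
  {p : {a // a ∈ S} ≃ {b : Fin n // (b : ℕ) < S.card}}
  {q : {a : Fin n // a ∉ S ∧ a ≠ x} ≃ {b : Fin n // S.card < (b : ℕ)}}

lemma glueFun_mem {y : Fin n} (h : y ∈ S) :
    glueFun x S hkn p q y = (p ⟨y, h⟩).1 := dif_pos h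

lemma glueFun_x (hx : x ∉ S) :
    glueFun x S hkn p q x = ⟨S.card, hkn⟩ := by
  unfold glueFun; rw [dif_neg hx, dif_pos rfl]

lemma glueFun_other {y : Fin n} (h : y ∉ S) (h2 : y ≠ x) :
    glueFun x S hkn p q y = (q ⟨y, h, h2⟩).1 := by
  unfold glueFun; rw [dif_neg h, dif_neg h2]

lemma glueInv_lt {b : Fin n} (h : (b : ℕ) < S.card) :
    glueInv x S hkn p q b = (p.symm ⟨b, h⟩).1 := dif_pos h

lemma glueInv_eq {b : Fin n} (h : (b : ℕ) = S.card) :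
    glueInv x S hkn p q b = x := by
  unfold glueInv; rw [dif_neg (by omega), dif_neg (by omega)]

lemma glueInv_gt {b : Fin n} (h : S.card < (b : ℕ)) :
    glueInv x S hkn p q b = (q.symm ⟨b, h⟩).1 := by
  unfold glueInv; rw [dif_neg (by omega), dif_pos h]

def glue (hkn : S.card < n) (hx : x ∉ S)
    (p : {a // a ∈ S} ≃ {b : Fin n // (b : ℕ) < S.card})
    (q : {a : Fin n // a ∉ S ∧ a ≠ x} ≃ {b : Fin n // S.card < (b : ℕ)}) :
    Equiv.Perm (Fin n) where
  toFun := glueFun x S hkn p q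
  invFun := glueInv x S hkn p q
  left_inv y := by
    by_cases h : y ∈ S
    · rw [glueFun_mem x S h, glueInv_lt x S (p ⟨y, h⟩).2]
      simp
    · by_cases h2 : y = x
      · rw [h2, glueFun_x x S hx, glueInv_eq x S rfl]
      · rw [glueFun_other x S h h2, glueInv_gt x S (q ⟨y, h, h2⟩).2]
        simp
  right_inv b := by
    rcases lt_trichotomy (b : ℕ) S.card with h | h | h
    · rw [glueInv_lt x S h, glueFun_mem x S (p.symm ⟨b, h⟩).2]
      simp
    · rw [glueInv_eq x S h, glueFun_x x S hx]
      exact Fin.ext h.symm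
    · rw [glueInv_gt x S h]
      have h3 := (q.symm ⟨b, h⟩).2
      rw [glueFun_other x S h3.1 h3.2]
      simp

lemma glue_apply_mem (hkn : S.card < n) (hx : x ∉ S) (p) (q) {y : Fin n} (h : y ∈ S) :
    glue x S hkn hx p q y = (p ⟨y, h⟩).1 := glueFun_mem x S h

lemma glue_apply_x (hkn : S.card < n) (hx : x ∉ S) (p) (q) :
    glue x S hkn hx p q x = ⟨S.card, hkn⟩ := glueFun_x x S hx

lemma glue_apply_other (hkn : S.card < n) (hx : x ∉ S) (p) (q) {y : Fin n}
    (h : y ∉ S) (h2 : y ≠ x) :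
    glue x S hkn hx p q y = (q ⟨y, h, h2⟩).1 := glueFun_other x S h h2

lemma glue_preds (hkn : S.card < n) (hx : x ∉ S) (p) (q) :
    preds (glue x S hkn hx p q) x = S := by
  ext y
  simp only [preds, mem_filter, mem_univ, true_and, glue_apply_x x S hkn hx]
  by_cases h : y ∈ S
  · simp only [h, iff_true, glue_apply_mem x S hkn hx p q h]
    exact (p ⟨y, h⟩).2
  · simp only [h, iff_false, not_lt]
    by_cases h2 : y = x
    · rw [h2, glue_apply_x x S hkn hx]
    · rw [glue_apply_other x S hkn hx p q h h2]
      exact Fin.le_def.mpr (le_of_lt (q ⟨y, h, h2⟩).2)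

lemma preds_iff {σ : Equiv.Perm (Fin n)} :
    preds σ x = S ↔ ∀ y, σ y < σ x ↔ y ∈ S := by
  constructor
  · intro h y
    rw [← h]
    simp [preds]
  · intro h
    ext y
    simp only [preds, mem_filter, mem_univ, true_and]
    exact h y

lemma val_apply_x {σ : Equiv.Perm (Fin n)} (hσ : preds σ x = S) :
    (σ x : ℕ) = S.card := by
  have : S = (Finset.Iio (σ x)).map σ.symm.toEmbedding := by
    ext y
    rw [← hσ]
    simp only [preds, mem_filter, mem_univ, true_and, Finset.mem_map,
      Finset.mem_Iio, Equiv.coe_toEmbedding]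
    constructor
    · intro h; exact ⟨σ y, h, by simp⟩
    · rintro ⟨b, hb, rfl⟩; simpa using hb
  rw [this, Finset.card_map, Fin.card_Iio]

def fiberEquiv (hkn : S.card < n) (hx : x ∉ S) :
    {σ : Equiv.Perm (Fin n) // preds σ x = S} ≃
      ({a // a ∈ S} ≃ {b : Fin n // (b : ℕ) < S.card}) ×
      ({a : Fin n // a ∉ S ∧ a ≠ x} ≃ {b : Fin n // S.card < (b : ℕ)}) where
  toFun := fun ⟨σ, hσ⟩ =>
    ( Equiv.subtypeEquiv σ (fun a => by
        rw [← ((preds_iff x S).1 hσ a), Fin.lt_def, val_apply_x x S hσ]),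
      Equiv.subtypeEquiv σ (fun a => by
        have h1 := (preds_iff x S).1 hσ a
        rw [Fin.lt_def, val_apply_x x S hσ] at h1
        have h2 : (σ a : ℕ) = S.card ↔ a = x := by
          rw [← val_apply_x x S hσ, Fin.val_eq_val]
          exact σ.injective.eq_iff
        constructor
        · rintro ⟨ha, hax⟩
          have n1 : ¬ ((σ a : ℕ) < S.card) := fun hc => ha (h1.1 hc)
          have n2 : (σ a : ℕ) ≠ S.card := fun hc => hax (h2.1 hc)
          omega
        · intro hgt
          exact ⟨fun hc => by have := h1.2 hc; omega,
            fun hc => by have := h2.2 hc; omega⟩) )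
  invFun := fun pq => ⟨glue x S hkn hx pq.1 pq.2, glue_preds x S hkn hx _ _⟩
  left_inv := fun ⟨σ, hσ⟩ => by
    apply Subtype.ext
    apply Equiv.ext
    intro y
    by_cases h : y ∈ S
    · rw [glue_apply_mem x S hkn hx _ _ h]; rfl
    · by_cases h2 : y = x
      · rw [h2, glue_apply_x x S hkn hx]
        exact Fin.ext (val_apply_x x S hσ).symm
      · rw [glue_apply_other x S hkn hx _ _ h h2]; rfl
  right_inv := fun ⟨p, q⟩ => by
    apply Prod.ext
    · apply Equiv.ext
      rintro ⟨a, ha⟩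
      apply Subtype.ext
      show glue x S hkn hx p q a = _
      rw [glue_apply_mem x S hkn hx p q ha]
    · apply Equiv.ext
      rintro ⟨a, ha⟩
      apply Subtype.ext
      show glue x S hkn hx p q a = _
      rw [glue_apply_other x S hkn hx p q ha.1 ha.2]

lemma card_fiber (hkn : S.card < n) (hx : x ∉ S) :
    (Finset.univ.filter fun σ : Equiv.Perm (Fin n) => preds σ x = S).card
      = S.card.factorial * (n - S.card - 1).factorial := by
  have h1 : Fintype.card {b : Fin n // (b : ℕ) < S.card} = S.card := by
    rw [Fintype.card_subtype]
    have : (Finset.univ.filter fun b : Fin n => (b : ℕ) < S.card)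
        = Finset.Iio (⟨S.card, hkn⟩ : Fin n) := by
      ext b; simp [Fin.lt_def]
    rw [this, Fin.card_Iio]
  have h2 : Fintype.card {b : Fin n // S.card < (b : ℕ)} = n - S.card - 1 := by
    rw [Fintype.card_subtype]
    have : (Finset.univ.filter fun b : Fin n => S.card < (b : ℕ))
        = Finset.Ioi (⟨S.card, hkn⟩ : Fin n) := by
      ext b; simp [Fin.lt_def]
    rw [this, Fin.card_Ioi]
    simp only [Fin.val_mk]
    omega
  have h3 : Fintype.card {a // a ∈ S} = S.card := Fintype.card_coe S
  have h4 : Fintype.card {a : Fin n // a ∉ S ∧ a ≠ x} = n - S.card - 1 := by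
    rw [Fintype.card_subtype]
    have : (Finset.univ.filter fun a : Fin n => a ∉ S ∧ a ≠ x)
        = Finset.univ \ insert x S := by
      ext a; simp [mem_insert]; tauto
    rw [this, Finset.card_sdiff_of_subset (Finset.subset_univ _), card_univ, Fintype.card_fin,
      Finset.card_insert_of_notMem hx]
    omega
  rw [← Fintype.card_subtype, Fintype.card_congr (fiberEquiv x S hkn hx),
    Fintype.card_prod,
    Fintype.card_equiv (Fintype.equivOfCardEq (h3.trans h1.symm)),
    Fintype.card_equiv (Fintype.equivOfCardEq (h4.trans h2.symm)), h3, h4]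

end Fiber

/-- Grouping the sum over all permutations by the predecessor set. -/
theorem perm_average_eq_grouped_sum (n : ℕ) (hn : 1 ≤ n)
    (A : Finset (Fin n) → ℝ) (x : Fin n) :
    (1 / (Nat.factorial n) : ℝ) *
      ∑ σ : Equiv.Perm (Fin n), (A (insert x (preds σ x)) - A (preds σ x)) =
    ∑ S ∈ (Finset.univ.erase x).powerset,
      ((S.card.factorial * (n - S.card - 1).factorial : ℝ) / (Nat.factorial n)) *
        (A (insert x S) - A S) := by
  have himg : (Finset.univ.image fun σ : Equiv.Perm (Fin n) => preds σ x)
      ⊆ (Finset.univ.erase x).powerset := by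
    intro S hS
    simp only [Finset.mem_image, Finset.mem_univ, true_and] at hS
    obtain ⟨σ, rfl⟩ := hS
    simp only [Finset.mem_powerset]
    intro y hy
    simp only [preds, mem_filter, mem_univ, true_and] at hy
    simp only [mem_erase, mem_univ, and_true]
    intro hc; subst hc; exact lt_irrefl _ hy
  have key : ∑ σ : Equiv.Perm (Fin n), (A (insert x (preds σ x)) - A (preds σ x))
      = ∑ S ∈ (Finset.univ.erase x).powerset,
          ((Finset.univ.filter fun σ : Equiv.Perm (Fin n) => preds σ x = S).card : ℝ)
            * (A (insert x S) - A S) := by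
    rw [Finset.sum_comp (fun S => A (insert x S) - A S) (fun σ => preds σ x),
      Finset.sum_subset himg (fun S _ hS => by
        have : (Finset.univ.filter fun σ : Equiv.Perm (Fin n) => preds σ x = S) = ∅ := by
          rw [Finset.filter_eq_empty_iff]
          intro σ _ hc
          exact hS (Finset.mem_image.2 ⟨σ, Finset.mem_univ σ, hc⟩)
        rw [this]
        simp)]
    exact Finset.sum_congr rfl fun S _ => by rw [nsmul_eq_mul]
  rw [key, Finset.mul_sum]
  apply Finset.sum_congr rfl
  intro S hS
  rw [Finset.mem_powerset] at hS
  have hx : x ∉ S := fun hc => (Finset.mem_erase.1 (hS hc)).1 rfl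
  have hkn : S.card < n := by
    have := Finset.card_le_card hS
    rw [Finset.card_erase_of_mem (Finset.mem_univ x), card_univ, Fintype.card_fin] at this
    omega
  rw [card_fiber x S hkn hx]
  push_cast
  ring
end

section
/- The Shapley value satisfies symmetry (equal value condition): let D be a finite set, A : Set(D) → ℝ, and x, y ∈ D with x ≠ y. If for every subset S ⊆ D \ {x, y} we have A(S ∪ {x}) = A(S ∪ {y}), then the Shapley values of x and y coincide: (1/|D|!) Σ_π [A(P_π(x) ∪ {x}) − A(P_π(x))] = (1/|D|!) Σ_π [A(P_π(y) ∪ {y}) − A(P_π(y))]. -/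
/-!
Interchangeability of `x` and `y` says exactly that `A` is invariant under the transposition
`(x y)` acting on coalitions. Right multiplication by `(x y)` is a bijection of permutations,
and it carries the predecessors of `x` in `σ` to their image under `(x y)` as the predecessors
of `y` in `σ * (x y)`; so each marginal contribution of `x` reappears as one of `y`.
-/

open Finset

theorem preds_mul {n : ℕ} (σ τ : Equiv.Perm (Fin n)) (z : Fin n) :
    preds (σ * τ) z = (preds σ (τ z)).map τ.symm.toEmbedding := by
  ext w
  simp only [preds, mem_map_equiv, Equiv.symm_symm, mem_filter_univ]
  rfl

section Swap

variable {α β : Type*} [DecidableEq α] {x y : α}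

theorem Finset.map_swap_eq_self {S : Finset α} (hx : x ∉ S) (hy : y ∉ S) :
    S.map (Equiv.swap x y).toEmbedding = S := by
  rw [map_eq_image]
  exact (image_congr fun z hz => Equiv.swap_apply_of_ne_of_ne
    (hz.ne_of_notMem hx) (hz.ne_of_notMem hy)).trans image_id

theorem apply_map_swap_of_forall_insert_eq (A : Finset α → β)
    (h : ∀ S, x ∉ S → y ∉ S → A (insert x S) = A (insert y S)) (T : Finset α) :
    A (T.map (Equiv.swap x y).toEmbedding) = A T := by
  set S := (T.erase x).erase y with hS_def
  have hxS : x ∉ S := fun hx => notMem_erase x T (mem_of_mem_erase hx)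
  have hyS : y ∉ S := notMem_erase y _
  have hS : S.map (Equiv.swap x y).toEmbedding = S := map_swap_eq_self hxS hyS
  by_cases hxT : x ∈ T <;> by_cases hyT : y ∈ T
  · have hT : T = insert x (insert y S) := by
      ext; simp only [hS_def, mem_insert, mem_erase]; grind
    simp [hT, map_insert, hS, insert_comm]
  · have hT : T = insert x S := by ext; simp only [hS_def, mem_insert, mem_erase]; grind
    simp [hT, map_insert, hS, h S hxS hyS]
  · have hT : T = insert y S := by ext; simp only [hS_def, mem_insert, mem_erase]; grind
    simp [hT, map_insert, hS, h S hxS hyS]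
  · have hT : T = S := by ext; simp only [hS_def, mem_erase]; grind
    rw [hT, hS]

end Swap

theorem shapley_symmetry_general (n : ℕ) (A : Finset (Fin n) → ℝ) (x y : Fin n)
    (h : ∀ S ⊆ (Finset.univ.erase x).erase y, A (insert x S) = A (insert y S)) :
    (1 / (Nat.factorial n) : ℝ) *
      ∑ σ : Equiv.Perm (Fin n), (A (insert x (preds σ x)) - A (preds σ x)) =
    (1 / (Nat.factorial n) : ℝ) *
      ∑ σ : Equiv.Perm (Fin n), (A (insert y (preds σ y)) - A (preds σ y)) := by
  have hA : ∀ T, A (T.map (Equiv.swap x y).toEmbedding) = A T :=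
    apply_map_swap_of_forall_insert_eq A fun S hx hy =>
      h S fun z hz => by simp [hz.ne_of_notMem hx, hz.ne_of_notMem hy]
  have hinsert (P : Finset (Fin n)) : insert y (P.map (Equiv.swap x y).toEmbedding) =
      (insert x P).map (Equiv.swap x y).toEmbedding := by
    rw [map_insert, Equiv.coe_toEmbedding, Equiv.swap_apply_left]
  congr 1
  refine Fintype.sum_bijective (· * Equiv.swap x y) (Group.mulRight_bijective _) _ _ fun σ => ?_
  rw [preds_mul, Equiv.swap_apply_right, Equiv.symm_swap, hinsert, hA, hA]

/-- Symmetry (equal value condition): interchangeable players get equal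
Shapley values. -/
theorem shapley_symmetry (n : ℕ) (A : Finset (Fin n) → ℝ) (x y : Fin n)
    (hxy : x ≠ y)
    (h : ∀ S ⊆ (Finset.univ.erase x).erase y, A (insert x S) = A (insert y S)) :
    (1 / (Nat.factorial n) : ℝ) *
      ∑ σ : Equiv.Perm (Fin n), (A (insert x (preds σ x)) - A (preds σ x)) =
    (1 / (Nat.factorial n) : ℝ) *
      ∑ σ : Equiv.Perm (Fin n), (A (insert y (preds σ y)) - A (preds σ y)) :=
  shapley_symmetry_general n A x y h
end
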